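/- arXiv:math/0204348 — 5 statements merged into one kernel-verified Lean document; each statement's English description precedes it below -/
import Mathlib

section
/- Let (A,B,Z,T) be a Hopf-Galois system. Then the left Galois map κ_l : Z ⊗ Z → A ⊗ Z, defined as (1_A ⊗ m_Z) ∘ (α ⊗ 1_Z) where α : Z → A ⊗ Z is the left A-coaction, is bijective, with inverse η_l = (1_Z ⊗ m_Z) ∘ (1_Z ⊗ S ⊗ 1_Z) ∘ (γ ⊗ 1_Z). -/
set_option maxHeartbeats 1000000
set_option synthInstance.maxHeartbeats 400000


open TensorProduct

/-- **Hopf-Galois systems: bijectivity of the left Galois map.**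
Let `(A,B,Z,T)` be a Hopf-Galois system: `A`, `B` are bialgebras, `Z` is an
`A`-`B`-bicomodule algebra with left coaction `α` and right coaction `β`,
there are algebra morphisms `γ : A → Z ⊗ T`, `δ : B → T ⊗ Z` satisfying the
compatibility axioms (HG3), and a linear map `S : T → Z` satisfying the
generalized antipode axioms (HG4).  Then the left Galois map
`κₗ = (1_A ⊗ m_Z) ∘ (α ⊗ 1_Z) : Z ⊗ Z → A ⊗ Z` is bijective, with inverse
`ηₗ = (1_Z ⊗ m_Z) ∘ (1_Z ⊗ S ⊗ 1_Z) ∘ (γ ⊗ 1_Z)`. -/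
theorem hopf_galois_system_left_galois_map_bijective
    (k : Type*) [Field k]
    (A B Z T : Type*) [Ring A] [Ring B] [Ring Z] [Ring T]
    [Bialgebra k A] [Bialgebra k B] [Algebra k Z] [Algebra k T]
    [Nontrivial A] [Nontrivial B] [Nontrivial Z] [Nontrivial T]
    -- (HG2) Z is an A-B-bicomodule algebra
    (α : Z →ₐ[k] A ⊗[k] Z) (β : Z →ₐ[k] Z ⊗[k] B)
    (hα_coassoc :
      (TensorProduct.assoc k A A Z).toLinearMap ∘ₗ
        TensorProduct.map (Coalgebra.comul (R := k) (A := A)) LinearMap.id ∘ₗ α.toLinearMap =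
      TensorProduct.map LinearMap.id α.toLinearMap ∘ₗ α.toLinearMap)
    (hα_counit :
      (TensorProduct.lid k Z).toLinearMap ∘ₗ
        TensorProduct.map (Coalgebra.counit (R := k) (A := A)) LinearMap.id ∘ₗ α.toLinearMap =
      LinearMap.id)
    (hβ_coassoc :
      (TensorProduct.assoc k Z B B).toLinearMap ∘ₗ
        TensorProduct.map β.toLinearMap LinearMap.id ∘ₗ β.toLinearMap =
      TensorProduct.map LinearMap.id (Coalgebra.comul (R := k) (A := B)) ∘ₗ β.toLinearMap)
    (hβ_counit :
      (TensorProduct.rid k Z).toLinearMap ∘ₗ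
        TensorProduct.map LinearMap.id (Coalgebra.counit (R := k) (A := B)) ∘ₗ β.toLinearMap =
      LinearMap.id)
    (h_bicomodule :
      TensorProduct.map LinearMap.id β.toLinearMap ∘ₗ α.toLinearMap =
      (TensorProduct.assoc k A Z B).toLinearMap ∘ₗ
        TensorProduct.map α.toLinearMap LinearMap.id ∘ₗ β.toLinearMap)
    -- (HG3)
    (γ : A →ₐ[k] Z ⊗[k] T) (δ : B →ₐ[k] T ⊗[k] Z)
    (hHG3₁ :
      (TensorProduct.assoc k Z T Z).toLinearMap ∘ₗ
        TensorProduct.map γ.toLinearMap LinearMap.id ∘ₗ α.toLinearMap =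
      TensorProduct.map LinearMap.id δ.toLinearMap ∘ₗ β.toLinearMap)
    (hHG3₂ :
      TensorProduct.map LinearMap.id γ.toLinearMap ∘ₗ (Coalgebra.comul (R := k) (A := A)) =
      (TensorProduct.assoc k A Z T).toLinearMap ∘ₗ
        TensorProduct.map α.toLinearMap LinearMap.id ∘ₗ γ.toLinearMap)
    (hHG3₃ :
      (TensorProduct.assoc k T Z B).toLinearMap ∘ₗ
        TensorProduct.map δ.toLinearMap LinearMap.id ∘ₗ (Coalgebra.comul (R := k) (A := B)) =
      TensorProduct.map LinearMap.id β.toLinearMap ∘ₗ δ.toLinearMap)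
    -- (HG4)
    (S : T →ₗ[k] Z)
    (hHG4₁ :
      LinearMap.mul' k Z ∘ₗ TensorProduct.map LinearMap.id S ∘ₗ γ.toLinearMap =
      Algebra.linearMap k Z ∘ₗ (Coalgebra.counit (R := k) (A := A)))
    (hHG4₂ :
      LinearMap.mul' k Z ∘ₗ TensorProduct.map S LinearMap.id ∘ₗ δ.toLinearMap =
      Algebra.linearMap k Z ∘ₗ (Coalgebra.counit (R := k) (A := B))) :
    -- the left Galois map and its claimed inverse
    let κl : Z ⊗[k] Z →ₗ[k] A ⊗[k] Z :=
      TensorProduct.map LinearMap.id (LinearMap.mul' k Z) ∘ₗ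
        (TensorProduct.assoc k A Z Z).toLinearMap ∘ₗ
          TensorProduct.map α.toLinearMap LinearMap.id
    let ηl : A ⊗[k] Z →ₗ[k] Z ⊗[k] Z :=
      TensorProduct.map LinearMap.id (LinearMap.mul' k Z) ∘ₗ
        TensorProduct.map LinearMap.id (TensorProduct.map S LinearMap.id) ∘ₗ
          (TensorProduct.assoc k Z T Z).toLinearMap ∘ₗ
            TensorProduct.map γ.toLinearMap LinearMap.id
    Function.Bijective κl ∧ κl ∘ₗ ηl = LinearMap.id ∧ ηl ∘ₗ κl = LinearMap.id := by

  intro κl ηl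
  -- Key identity 1: (1 ⊗ (m ∘ (S ⊗ 1)))(assoc((γ ⊗ 1)(α z))) = z ⊗ 1
  have hβc : ∀ z : Z,
      (TensorProduct.map (LinearMap.id (R := k) (M := Z))
        (Coalgebra.counit (R := k) (A := B))) (β z) = z ⊗ₜ[k] (1 : k) := by
    intro z
    have h := LinearMap.congr_fun hβ_counit z
    apply (TensorProduct.rid k Z).injective
    simpa using h
  have key1' :
      TensorProduct.map LinearMap.id (LinearMap.mul' k Z ∘ₗ TensorProduct.map S LinearMap.id) ∘ₗ
        (TensorProduct.assoc k Z T Z).toLinearMap ∘ₗ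
          TensorProduct.map γ.toLinearMap LinearMap.id ∘ₗ α.toLinearMap =
      TensorProduct.map LinearMap.id
          (Algebra.linearMap k Z ∘ₗ (Coalgebra.counit (R := k) (A := B))) ∘ₗ β.toLinearMap := by
    rw [hHG3₁, ← LinearMap.comp_assoc, ← TensorProduct.map_comp, LinearMap.id_comp,
      LinearMap.comp_assoc (δ.toLinearMap)]
    rw [hHG4₂]
  have key1 : ∀ z : Z,
      (TensorProduct.map LinearMap.id (LinearMap.mul' k Z ∘ₗ TensorProduct.map S LinearMap.id))
        ((TensorProduct.assoc k Z T Z)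
          ((TensorProduct.map γ.toLinearMap LinearMap.id) (α z))) = z ⊗ₜ[k] (1 : Z) := by
    intro z
    have h := LinearMap.congr_fun key1' z
    simp only [LinearMap.comp_apply, LinearEquiv.coe_coe, AlgHom.toLinearMap_apply] at h
    have hsplit : (TensorProduct.map (LinearMap.id (R := k) (M := Z))
        (Algebra.linearMap k Z ∘ₗ (Coalgebra.counit (R := k) (A := B)))) =
        TensorProduct.map LinearMap.id (Algebra.linearMap k Z) ∘ₗ
          TensorProduct.map LinearMap.id (Coalgebra.counit (R := k) (A := B)) := by
      apply TensorProduct.ext'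
      intro x b
      simp
    rw [h, hsplit, LinearMap.comp_apply, hβc z]
    simp [Algebra.linearMap_apply]
  -- Key identity 2: (1 ⊗ (m ∘ (1 ⊗ S)))(assoc((α ⊗ 1)(γ a))) = a ⊗ 1
  have key2' :
      TensorProduct.map LinearMap.id (LinearMap.mul' k Z ∘ₗ TensorProduct.map LinearMap.id S) ∘ₗ
        (TensorProduct.assoc k A Z T).toLinearMap ∘ₗ
          TensorProduct.map α.toLinearMap LinearMap.id ∘ₗ γ.toLinearMap =
      TensorProduct.map LinearMap.id
          (Algebra.linearMap k Z ∘ₗ (Coalgebra.counit (R := k) (A := A))) ∘ₗ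
        (Coalgebra.comul (R := k) (A := A)) := by
    rw [← hHG3₂, ← LinearMap.comp_assoc, ← TensorProduct.map_comp, LinearMap.id_comp,
      LinearMap.comp_assoc (γ.toLinearMap)]
    rw [hHG4₁]
  have key2 : ∀ a : A,
      (TensorProduct.map LinearMap.id (LinearMap.mul' k Z ∘ₗ TensorProduct.map LinearMap.id S))
        ((TensorProduct.assoc k A Z T)
          ((TensorProduct.map α.toLinearMap LinearMap.id) (γ a))) = a ⊗ₜ[k] (1 : Z) := by
    intro a
    have h := LinearMap.congr_fun key2' a
    simp only [LinearMap.comp_apply, LinearEquiv.coe_coe, AlgHom.toLinearMap_apply] at h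
    have hsplit : (TensorProduct.map (LinearMap.id (R := k) (M := A))
        (Algebra.linearMap k Z ∘ₗ (Coalgebra.counit (R := k) (A := A)))) =
        TensorProduct.map LinearMap.id (Algebra.linearMap k Z) ∘ₗ
          TensorProduct.map LinearMap.id (Coalgebra.counit (R := k) (A := A)) := by
      apply TensorProduct.ext'
      intro x b
      simp
    rw [h, hsplit, LinearMap.comp_apply]
    have hc : (TensorProduct.map (LinearMap.id (R := k) (M := A))
        (Coalgebra.counit (R := k) (A := A))) (Coalgebra.comul a) = a ⊗ₜ[k] (1 : k) :=
      Coalgebra.lTensor_counit_comul a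
    rw [hc]
    simp [Algebra.linearMap_apply]
  -- step identity for ηl ∘ κl
  have step1 : ∀ (v : A ⊗[k] Z) (y : Z),
      ηl ((TensorProduct.map LinearMap.id (LinearMap.mul' k Z))
          ((TensorProduct.assoc k A Z Z) (v ⊗ₜ[k] y))) =
      (TensorProduct.map LinearMap.id (LinearMap.mul' k Z))
        ((TensorProduct.assoc k Z Z Z)
          (((TensorProduct.map LinearMap.id
              (LinearMap.mul' k Z ∘ₗ TensorProduct.map S LinearMap.id))
            ((TensorProduct.assoc k Z T Z)
              ((TensorProduct.map γ.toLinearMap LinearMap.id) v))) ⊗ₜ[k] y)) := by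
    intro v y
    induction v with
    | zero => simp [ηl]
    | add v₁ v₂ h₁ h₂ =>
      simp only [TensorProduct.add_tmul, map_add, h₁, h₂]
    | tmul a z =>
      simp only [ηl, LinearMap.comp_apply, TensorProduct.assoc_tmul,
        TensorProduct.map_tmul, LinearMap.id_apply, LinearMap.mul'_apply,
        LinearEquiv.coe_coe, AlgHom.toLinearMap_apply]
      induction γ a with
      | zero => simp
      | add u₁ u₂ h₁ h₂ =>
        simp only [TensorProduct.add_tmul, map_add, TensorProduct.add_tmul, h₁, h₂]
      | tmul w t =>
        simp [mul_assoc]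
  -- step identity for κl ∘ ηl
  have step2 : ∀ (u : Z ⊗[k] T) (z : Z),
      κl ((TensorProduct.map LinearMap.id (LinearMap.mul' k Z))
          ((TensorProduct.map LinearMap.id (TensorProduct.map S LinearMap.id))
            ((TensorProduct.assoc k Z T Z) (u ⊗ₜ[k] z)))) =
      (TensorProduct.map LinearMap.id (LinearMap.mul' k Z))
        ((TensorProduct.assoc k A Z Z)
          (((TensorProduct.map LinearMap.id
              (LinearMap.mul' k Z ∘ₗ TensorProduct.map LinearMap.id S))
            ((TensorProduct.assoc k A Z T)
              ((TensorProduct.map α.toLinearMap LinearMap.id) u))) ⊗ₜ[k] z)) := by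
    intro u z
    induction u with
    | zero => simp [κl]
    | add u₁ u₂ h₁ h₂ =>
      simp only [TensorProduct.add_tmul, map_add, h₁, h₂]
    | tmul w t =>
      simp only [κl, LinearMap.comp_apply, TensorProduct.assoc_tmul,
        TensorProduct.map_tmul, LinearMap.id_apply, LinearMap.mul'_apply,
        LinearEquiv.coe_coe, AlgHom.toLinearMap_apply]
      induction α w with
      | zero => simp
      | add v₁ v₂ h₁ h₂ =>
        simp only [TensorProduct.add_tmul, map_add, TensorProduct.add_tmul, h₁, h₂]
      | tmul a w' =>
        simp [mul_assoc]
  have hηκ : ηl ∘ₗ κl = LinearMap.id := by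
    apply TensorProduct.ext'
    intro x y
    have hκ : κl (x ⊗ₜ[k] y) =
        (TensorProduct.map LinearMap.id (LinearMap.mul' k Z))
          ((TensorProduct.assoc k A Z Z) ((α x) ⊗ₜ[k] y)) := by
      simp [κl]
    simp only [LinearMap.comp_apply, hκ, LinearMap.id_apply]
    rw [step1 (α x) y, key1 x]
    simp
  have hκη : κl ∘ₗ ηl = LinearMap.id := by
    apply TensorProduct.ext'
    intro a z
    have hη : ηl (a ⊗ₜ[k] z) =
        (TensorProduct.map LinearMap.id (LinearMap.mul' k Z))
          ((TensorProduct.map LinearMap.id (TensorProduct.map S LinearMap.id))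
            ((TensorProduct.assoc k Z T Z) ((γ a) ⊗ₜ[k] z))) := by
      simp [ηl]
    simp only [LinearMap.comp_apply, hη, LinearMap.id_apply]
    rw [step2 (γ a) z, key2 a]
    simp
  refine ⟨?_, hκη, hηκ⟩
  exact Function.bijective_iff_has_inverse.mpr
    ⟨ηl, fun v => LinearMap.congr_fun hηκ v, fun v => LinearMap.congr_fun hκη v⟩
end

section
/- Let (A,B,Z,T) be a Hopf-Galois system. Then the right Galois map κ_r : Z ⊗ Z → Z ⊗ B, defined as (m_Z ⊗ 1_B) ∘ (1_Z ⊗ β) where β : Z → Z ⊗ B is the right B-coaction, is bijective, with inverse η_r = (m_Z ⊗ 1_Z) ∘ (1_Z ⊗ S ⊗ 1_Z) ∘ (1_Z ⊗ δ). -/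
open TensorProduct

section HGAux
variable {k : Type*} [CommRing k] {Z P Q R : Type*} [Ring Z] [Algebra k Z]
  [AddCommGroup P] [Module k P] [AddCommGroup Q] [Module k Q] [AddCommGroup R] [Module k R]

/-- `HGPhi f` sends `x ⊗ p` to `x · f p` (multiplying into the first tensor factor). -/
noncomputable def HGPhi (f : P →ₗ[k] Z ⊗[k] Q) : Z ⊗[k] P →ₗ[k] Z ⊗[k] Q :=
  TensorProduct.map (LinearMap.mul' k Z) LinearMap.id ∘ₗ
    (TensorProduct.assoc k Z Z Q).symm.toLinearMap ∘ₗ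
      TensorProduct.map LinearMap.id f

lemma HGPhi_tmul (f : P →ₗ[k] Z ⊗[k] Q) (x : Z) (p : P) :
    HGPhi f (x ⊗ₜ[k] p) = TensorProduct.map (LinearMap.mulLeft k x) LinearMap.id (f p) := by
  have : ∀ w : Z ⊗[k] Q,
      TensorProduct.map (LinearMap.mul' k Z) LinearMap.id
        ((TensorProduct.assoc k Z Z Q).symm (x ⊗ₜ[k] w)) =
      TensorProduct.map (LinearMap.mulLeft k x) LinearMap.id w := by
    intro w
    induction w using TensorProduct.induction_on with
    | zero => simp
    | tmul z q => simp
    | add a b ha hb => simp [tmul_add, map_add, ha, hb]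
  simpa [HGPhi] using this (f p)

lemma HGPhi_comp (f : P →ₗ[k] Z ⊗[k] Q) (g : Q →ₗ[k] Z ⊗[k] R) :
    HGPhi g ∘ₗ HGPhi f = HGPhi (HGPhi g ∘ₗ f) := by
  apply TensorProduct.ext'
  intro x p
  simp only [LinearMap.comp_apply, HGPhi_tmul]
  have : ∀ w : Z ⊗[k] Q,
      HGPhi g (TensorProduct.map (LinearMap.mulLeft k x) LinearMap.id w) =
      TensorProduct.map (LinearMap.mulLeft k x) LinearMap.id (HGPhi g w) := by
    intro w
    induction w using TensorProduct.induction_on with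
    | zero => simp
    | tmul v q =>
        simp only [map_tmul, LinearMap.id_apply, LinearMap.mulLeft_apply, HGPhi_tmul,
          LinearMap.comp_apply]
        conv_rhs => rw [← LinearMap.comp_apply, ← TensorProduct.map_comp, LinearMap.id_comp,
          ← LinearMap.mulLeft_mul]
    | add a b ha hb => simp [map_add, ha, hb]
  exact this (f p)

lemma HGPhi_one :
    HGPhi ((TensorProduct.mk k Z Q) 1) = LinearMap.id := by
  apply TensorProduct.ext'
  intro x q
  simp [HGPhi_tmul]

end HGAux

section HGAssoc
variable {k : Type*} [CommRing k] {M M' N N' P : Type*}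
  [AddCommGroup M] [Module k M] [AddCommGroup M'] [Module k M']
  [AddCommGroup N] [Module k N] [AddCommGroup N'] [Module k N']
  [AddCommGroup P] [Module k P]

lemma HGassoc_mid (s : N →ₗ[k] N') :
    TensorProduct.map (TensorProduct.map LinearMap.id s) LinearMap.id ∘ₗ
      (TensorProduct.assoc k M N P).symm.toLinearMap =
    (TensorProduct.assoc k M N' P).symm.toLinearMap ∘ₗ
      TensorProduct.map LinearMap.id (TensorProduct.map s LinearMap.id) := by
  apply TensorProduct.ext'
  intro x w
  induction w using TensorProduct.induction_on with
  | zero => simp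
  | tmul n p => simp
  | add a b ha hb => simp_all [tmul_add]

lemma HGassoc_left (s : M →ₗ[k] M') :
    TensorProduct.map s LinearMap.id ∘ₗ (TensorProduct.assoc k M N P).toLinearMap =
    (TensorProduct.assoc k M' N P).toLinearMap ∘ₗ
      TensorProduct.map (TensorProduct.map s LinearMap.id) LinearMap.id := by
  apply TensorProduct.ext_threefold
  intro x n p
  simp

end HGAssoc

set_option maxHeartbeats 1000000 in
set_option synthInstance.maxHeartbeats 400000 in
/-- **Hopf-Galois systems: bijectivity of the left Galois map.**
Let `(A,B,Z,T)` be a Hopf-Galois system: `A`, `B` are bialgebras, `Z` is an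
`A`-`B`-bicomodule algebra with left coaction `α` and right coaction `β`,
there are algebra morphisms `γ : A → Z ⊗ T`, `δ : B → T ⊗ Z` satisfying the
compatibility axioms (HG3), and a linear map `S : T → Z` satisfying the
generalized antipode axioms (HG4).  Then the right Galois map
`κᵣ = (m_Z ⊗ 1_B) ∘ (1_Z ⊗ β) : Z ⊗ Z → Z ⊗ B` is bijective, with inverse
`ηᵣ = (m_Z ⊗ 1_Z) ∘ (1_Z ⊗ S ⊗ 1_Z) ∘ (1_Z ⊗ δ)`. -/
theorem hopf_galois_system_right_galois_map_bijective
    (k : Type*) [Field k]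
    (A B Z T : Type*) [Ring A] [Ring B] [Ring Z] [Ring T]
    [Bialgebra k A] [Bialgebra k B] [Algebra k Z] [Algebra k T]
    [Nontrivial A] [Nontrivial B] [Nontrivial Z] [Nontrivial T]
    -- (HG2) Z is an A-B-bicomodule algebra
    (α : Z →ₐ[k] A ⊗[k] Z) (β : Z →ₐ[k] Z ⊗[k] B)
    (hα_coassoc :
      (TensorProduct.assoc k A A Z).toLinearMap ∘ₗ
        TensorProduct.map (Coalgebra.comul (R := k) (A := A)) LinearMap.id ∘ₗ α.toLinearMap =
      TensorProduct.map LinearMap.id α.toLinearMap ∘ₗ α.toLinearMap)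
    (hα_counit :
      (TensorProduct.lid k Z).toLinearMap ∘ₗ
        TensorProduct.map (Coalgebra.counit (R := k) (A := A)) LinearMap.id ∘ₗ α.toLinearMap =
      LinearMap.id)
    (hβ_coassoc :
      (TensorProduct.assoc k Z B B).toLinearMap ∘ₗ
        TensorProduct.map β.toLinearMap LinearMap.id ∘ₗ β.toLinearMap =
      TensorProduct.map LinearMap.id (Coalgebra.comul (R := k) (A := B)) ∘ₗ β.toLinearMap)
    (hβ_counit :
      (TensorProduct.rid k Z).toLinearMap ∘ₗ
        TensorProduct.map LinearMap.id (Coalgebra.counit (R := k) (A := B)) ∘ₗ β.toLinearMap =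
      LinearMap.id)
    (h_bicomodule :
      TensorProduct.map LinearMap.id β.toLinearMap ∘ₗ α.toLinearMap =
      (TensorProduct.assoc k A Z B).toLinearMap ∘ₗ
        TensorProduct.map α.toLinearMap LinearMap.id ∘ₗ β.toLinearMap)
    -- (HG3)
    (γ : A →ₐ[k] Z ⊗[k] T) (δ : B →ₐ[k] T ⊗[k] Z)
    (hHG3₁ :
      (TensorProduct.assoc k Z T Z).toLinearMap ∘ₗ
        TensorProduct.map γ.toLinearMap LinearMap.id ∘ₗ α.toLinearMap =
      TensorProduct.map LinearMap.id δ.toLinearMap ∘ₗ β.toLinearMap)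
    (hHG3₂ :
      TensorProduct.map LinearMap.id γ.toLinearMap ∘ₗ (Coalgebra.comul (R := k) (A := A)) =
      (TensorProduct.assoc k A Z T).toLinearMap ∘ₗ
        TensorProduct.map α.toLinearMap LinearMap.id ∘ₗ γ.toLinearMap)
    (hHG3₃ :
      (TensorProduct.assoc k T Z B).toLinearMap ∘ₗ
        TensorProduct.map δ.toLinearMap LinearMap.id ∘ₗ (Coalgebra.comul (R := k) (A := B)) =
      TensorProduct.map LinearMap.id β.toLinearMap ∘ₗ δ.toLinearMap)
    -- (HG4)
    (S : T →ₗ[k] Z)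
    (hHG4₁ :
      LinearMap.mul' k Z ∘ₗ TensorProduct.map LinearMap.id S ∘ₗ γ.toLinearMap =
      Algebra.linearMap k Z ∘ₗ (Coalgebra.counit (R := k) (A := A)))
    (hHG4₂ :
      LinearMap.mul' k Z ∘ₗ TensorProduct.map S LinearMap.id ∘ₗ δ.toLinearMap =
      Algebra.linearMap k Z ∘ₗ (Coalgebra.counit (R := k) (A := B))) :
    -- the right Galois map and its claimed inverse
    let κr : Z ⊗[k] Z →ₗ[k] Z ⊗[k] B :=
      TensorProduct.map (LinearMap.mul' k Z) LinearMap.id ∘ₗ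
        (TensorProduct.assoc k Z Z B).symm.toLinearMap ∘ₗ
          TensorProduct.map LinearMap.id β.toLinearMap
    let ηr : Z ⊗[k] B →ₗ[k] Z ⊗[k] Z :=
      TensorProduct.map (LinearMap.mul' k Z) LinearMap.id ∘ₗ
        TensorProduct.map (TensorProduct.map LinearMap.id S) LinearMap.id ∘ₗ
          (TensorProduct.assoc k Z T Z).symm.toLinearMap ∘ₗ
            TensorProduct.map LinearMap.id δ.toLinearMap
    Function.Bijective κr ∧ κr ∘ₗ ηr = LinearMap.id ∧ ηr ∘ₗ κr = LinearMap.id := by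
  intro κr ηr
  have map_id_comp : ∀ {V W X : Type _} [AddCommGroup V] [Module k V] [AddCommGroup W]
      [Module k W] [AddCommGroup X] [Module k X] (f : V →ₗ[k] W) (g : W →ₗ[k] X),
      (TensorProduct.map (LinearMap.id : Z →ₗ[k] Z) (g ∘ₗ f)) =
        TensorProduct.map LinearMap.id g ∘ₗ TensorProduct.map LinearMap.id f := by
    intro V W X _ _ _ _ _ _ f g
    rw [← TensorProduct.map_comp, LinearMap.id_comp]
  have hκ : κr = HGPhi β.toLinearMap := rfl
  have hη : ηr = HGPhi (TensorProduct.map S LinearMap.id ∘ₗ δ.toLinearMap) := by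
    apply TensorProduct.ext'
    intro x b
    show (TensorProduct.map (LinearMap.mul' k Z) LinearMap.id)
        ((TensorProduct.map (TensorProduct.map LinearMap.id S) LinearMap.id)
          ((TensorProduct.assoc k Z T Z).symm (x ⊗ₜ δ b))) = _
    rw [HGPhi_tmul]
    have key : ∀ w : T ⊗[k] Z,
        (TensorProduct.map (LinearMap.mul' k Z) LinearMap.id)
          ((TensorProduct.map (TensorProduct.map LinearMap.id S) LinearMap.id)
            ((TensorProduct.assoc k Z T Z).symm (x ⊗ₜ w))) =
        TensorProduct.map (LinearMap.mulLeft k x) LinearMap.id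
          (TensorProduct.map S LinearMap.id w) := by
      intro w
      induction w using TensorProduct.induction_on with
      | zero => rw [tmul_zero]; simp
      | tmul t z => simp
      | add a b ha hb => simp [tmul_add, map_add, ha, hb]
    simpa using key (δ b)
  -- plumbing lemmas
  have plumb1 : (TensorProduct.assoc k Z Z Z).symm.toLinearMap ∘ₗ
      TensorProduct.map LinearMap.id (TensorProduct.map S LinearMap.id) ∘ₗ
        (TensorProduct.assoc k Z T Z).toLinearMap =
      TensorProduct.map (TensorProduct.map LinearMap.id S) LinearMap.id := by
    apply TensorProduct.ext_threefold
    intro x t z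
    simp
  have plumb2 : (TensorProduct.assoc k Z Z B).symm.toLinearMap ∘ₗ
      TensorProduct.map S (LinearMap.id : Z ⊗[k] B →ₗ[k] Z ⊗[k] B) ∘ₗ
        (TensorProduct.assoc k T Z B).toLinearMap =
      TensorProduct.map (TensorProduct.map S LinearMap.id) LinearMap.id := by
    apply TensorProduct.ext_threefold
    intro t z b
    simp
  have fold1 : TensorProduct.map (LinearMap.mul' k Z) (LinearMap.id : Z →ₗ[k] Z) ∘ₗ
      TensorProduct.map (TensorProduct.map LinearMap.id S) LinearMap.id ∘ₗ
        TensorProduct.map γ.toLinearMap LinearMap.id =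
      TensorProduct.map (LinearMap.mul' k Z ∘ₗ
        TensorProduct.map LinearMap.id S ∘ₗ γ.toLinearMap) LinearMap.id := by
    rw [← TensorProduct.map_comp, ← TensorProduct.map_comp]
    simp only [LinearMap.id_comp]
  have fold2 : TensorProduct.map (LinearMap.mul' k Z) (LinearMap.id : B →ₗ[k] B) ∘ₗ
      TensorProduct.map (TensorProduct.map S LinearMap.id) LinearMap.id ∘ₗ
        TensorProduct.map δ.toLinearMap LinearMap.id =
      TensorProduct.map (LinearMap.mul' k Z ∘ₗ
        TensorProduct.map S LinearMap.id ∘ₗ δ.toLinearMap) LinearMap.id := by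
    rw [← TensorProduct.map_comp, ← TensorProduct.map_comp]
    simp only [LinearMap.id_comp]
  have unfold1 : TensorProduct.map (Algebra.linearMap k Z ∘ₗ
      (Coalgebra.counit (R := k) (A := A))) (LinearMap.id : Z →ₗ[k] Z) =
      TensorProduct.map (Algebra.linearMap k Z) LinearMap.id ∘ₗ
        TensorProduct.map (Coalgebra.counit (R := k) (A := A)) LinearMap.id := by
    rw [← TensorProduct.map_comp, LinearMap.id_comp]
  have unfold2 : TensorProduct.map (Algebra.linearMap k Z ∘ₗ
      (Coalgebra.counit (R := k) (A := B))) (LinearMap.id : B →ₗ[k] B) =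
      TensorProduct.map (Algebra.linearMap k Z) LinearMap.id ∘ₗ
        TensorProduct.map (Coalgebra.counit (R := k) (A := B)) LinearMap.id := by
    rw [← TensorProduct.map_comp, LinearMap.id_comp]
  -- key computation 1 : ηr ∘ κr side
  have hG : HGPhi (TensorProduct.map S LinearMap.id ∘ₗ δ.toLinearMap) ∘ₗ β.toLinearMap =
      (TensorProduct.mk k Z Z) 1 := by
    apply LinearMap.ext
    intro z
    have h1 := LinearMap.congr_fun hHG3₁ z
    have hc := LinearMap.congr_fun hα_counit z
    simp only [LinearMap.comp_apply, LinearEquiv.coe_coe, LinearMap.id_apply,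
      AlgHom.toLinearMap_apply] at h1 hc
    have hc' : TensorProduct.map (Coalgebra.counit (R := k) (A := A)) LinearMap.id (α z) =
        (1 : k) ⊗ₜ[k] z := by
      apply (TensorProduct.lid k Z).injective
      rw [hc]
      simp
    simp only [LinearMap.comp_apply, HGPhi, LinearEquiv.coe_coe, AlgHom.toLinearMap_apply]
    rw [map_id_comp δ.toLinearMap (TensorProduct.map S LinearMap.id), LinearMap.comp_apply]
    rw [← h1]
    have p1 := LinearMap.congr_fun plumb1 (TensorProduct.map γ.toLinearMap LinearMap.id (α z))
    simp only [LinearMap.comp_apply, LinearEquiv.coe_coe] at p1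
    rw [p1]
    have f1 := LinearMap.congr_fun fold1 (α z)
    simp only [LinearMap.comp_apply] at f1
    rw [f1, hHG4₁, unfold1]
    simp only [LinearMap.comp_apply, hc', map_tmul, LinearMap.id_apply,
      Algebra.linearMap_apply, map_one, TensorProduct.mk_apply]
  -- key computation 2 : κr ∘ ηr side
  have hH : HGPhi β.toLinearMap ∘ₗ (TensorProduct.map S LinearMap.id ∘ₗ δ.toLinearMap) =
      (TensorProduct.mk k Z B) 1 := by
    have swap : TensorProduct.map (LinearMap.id : Z →ₗ[k] Z) β.toLinearMap ∘ₗ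
        TensorProduct.map S (LinearMap.id : Z →ₗ[k] Z) =
        TensorProduct.map S LinearMap.id ∘ₗ
          TensorProduct.map (LinearMap.id : T →ₗ[k] T) β.toLinearMap := by
      rw [← TensorProduct.map_comp, ← TensorProduct.map_comp]
      simp
    have hcu := Coalgebra.rTensor_counit_comp_comul (R := k) (A := B)
    apply LinearMap.ext
    intro b
    have h3 := LinearMap.congr_fun hHG3₃ b
    have hcu' := LinearMap.congr_fun hcu b
    simp only [LinearMap.comp_apply, LinearEquiv.coe_coe, LinearMap.id_apply,
      LinearMap.rTensor, TensorProduct.mk_apply, AlgHom.toLinearMap_apply] at h3 hcu'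
    simp only [LinearMap.comp_apply, HGPhi, LinearEquiv.coe_coe, AlgHom.toLinearMap_apply]
    rw [← LinearMap.comp_apply (TensorProduct.map LinearMap.id β.toLinearMap),
      swap, LinearMap.comp_apply, ← h3]
    have p2 := LinearMap.congr_fun plumb2
      (TensorProduct.map δ.toLinearMap LinearMap.id ((Coalgebra.comul (R := k) (A := B)) b))
    simp only [LinearMap.comp_apply, LinearEquiv.coe_coe] at p2
    rw [p2]
    have f2 := LinearMap.congr_fun fold2 ((Coalgebra.comul (R := k) (A := B)) b)
    simp only [LinearMap.comp_apply] at f2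
    rw [f2, hHG4₂, unfold2]
    simp only [LinearMap.comp_apply, hcu', map_tmul, LinearMap.id_apply,
      Algebra.linearMap_apply, map_one, TensorProduct.mk_apply]
  have hGK : ηr ∘ₗ κr = LinearMap.id := by
    rw [hη, hκ, HGPhi_comp, hG, HGPhi_one]
  have hKH : κr ∘ₗ ηr = LinearMap.id := by
    rw [hκ, hη, HGPhi_comp, hH, HGPhi_one]
  refine ⟨⟨?_, ?_⟩, hKH, hGK⟩
  · exact Function.LeftInverse.injective (g := ηr)
      (fun w => by simpa using LinearMap.congr_fun hGK w)
  · exact Function.RightInverse.surjective (g := ηr)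
      (fun w => by simpa using LinearMap.congr_fun hKH w)
end

section
/- Let A be a bialgebra over a field k. Then A admits an antipode (i.e. A is a Hopf algebra) if and only if the linear map κ_l : A ⊗ A → A ⊗ A defined by κ_l = (1_A ⊗ m) ∘ (Δ ⊗ 1_A) is bijective. -/
open TensorProduct

namespace FusionAux
variable {k : Type*} [CommSemiring k] {A : Type*} [Semiring A] [Bialgebra k A]
open Coalgebra

/-- right multiplication by `b` on the second tensor factor -/
noncomputable def psi (b : A) : A ⊗[k] A →ₗ[k] A ⊗[k] A :=
  map LinearMap.id (LinearMap.mulRight k b)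

@[simp] lemma psi_tmul (b x y : A) : psi b (x ⊗ₜ[k] y) = x ⊗ₜ[k] (y * b) := rfl

/-- the "fusion" operator associated to `f : A → A ⊗ A` -/
noncomputable def Phi (f : A →ₗ[k] A ⊗[k] A) : A ⊗[k] A →ₗ[k] A ⊗[k] A :=
  map LinearMap.id (LinearMap.mul' k A) ∘ₗ (TensorProduct.assoc k A A A).toLinearMap ∘ₗ
    map f LinearMap.id

/-- `a ↦ a ⊗ 1` -/
noncomputable def f0 : A →ₗ[k] A ⊗[k] A := (TensorProduct.mk k A A).flip 1

@[simp] lemma f0_apply (a : A) : (f0 : A →ₗ[k] A ⊗[k] A) a = a ⊗ₜ[k] 1 := rfl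

/-- `x ⊗ y ↦ ε(x) • y` -/
noncomputable def pi : A ⊗[k] A →ₗ[k] A :=
  (TensorProduct.lid k A).toLinearMap ∘ₗ LinearMap.rTensor A (counit (R := k))

@[simp] lemma pi_tmul (x y : A) : (pi : A ⊗[k] A →ₗ[k] A) (x ⊗ₜ[k] y) = counit (R := k) x • y := by
  simp [pi]

lemma lcomp {M N P : Type*} [AddCommMonoid M] [AddCommMonoid N] [AddCommMonoid P]
    [Module k M] [Module k N] [Module k P] (f : N →ₗ[k] P) (g : M →ₗ[k] N) (z : A ⊗[k] M) :
    map LinearMap.id f (map LinearMap.id g z) = map LinearMap.id (f ∘ₗ g) z := by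
  rw [← LinearMap.comp_apply, ← TensorProduct.map_comp, LinearMap.id_comp]

lemma aux1 (z : A ⊗[k] A) (b : A) :
    map LinearMap.id (LinearMap.mul' k A)
      ((TensorProduct.assoc k A A A) (z ⊗ₜ[k] b)) = psi b z := by
  induction z using TensorProduct.induction_on with
  | zero => simp
  | tmul x y => simp
  | add z₁ z₂ h₁ h₂ => simp [add_tmul, h₁, h₂]

lemma Phi_tmul (f : A →ₗ[k] A ⊗[k] A) (a b : A) : Phi f (a ⊗ₜ[k] b) = psi b (f a) := by
  simp [Phi, aux1]

lemma psi_psi (b y : A) (z : A ⊗[k] A) : psi b (psi y z) = psi (y * b) z := by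
  induction z using TensorProduct.induction_on with
  | zero => simp
  | tmul x w => simp [mul_assoc]
  | add z₁ z₂ h₁ h₂ => simp [h₁, h₂]

@[simp] lemma psi_one (z : A ⊗[k] A) : psi (1 : A) z = z := by
  induction z using TensorProduct.induction_on with
  | zero => simp
  | tmul x w => simp
  | add z₁ z₂ h₁ h₂ => simp [h₁, h₂]

lemma Phi_psi (f : A →ₗ[k] A ⊗[k] A) (b : A) (z : A ⊗[k] A) :
    Phi f (psi b z) = psi b (Phi f z) := by
  induction z using TensorProduct.induction_on with
  | zero => simp
  | tmul x y => simp [Phi_tmul, psi_psi]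
  | add z₁ z₂ h₁ h₂ => simp [h₁, h₂]

lemma pi_psi (y : A) (z : A ⊗[k] A) :
    (pi : A ⊗[k] A →ₗ[k] A) (psi y z) = pi z * y := by
  induction z using TensorProduct.induction_on with
  | zero => simp
  | tmul p q => simp [smul_mul_assoc, mul_assoc]
  | add z₁ z₂ h₁ h₂ => simp [h₁, h₂, add_mul]

/-- counit axiom on the left factor -/
lemma pi_comul (a : A) : (pi : A ⊗[k] A →ₗ[k] A) (comul a) = a := by
  simp [pi, Coalgebra.rTensor_counit_comul]

/-- counit axiom on the right factor, in the needed form -/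
lemma counit_right (a : A) :
    map LinearMap.id (Algebra.linearMap k A ∘ₗ counit (R := k)) (comul a)
      = a ⊗ₜ[k] (1 : A) := by
  have h : map LinearMap.id (Algebra.linearMap k A ∘ₗ counit (R := k))
        (comul a)
      = map LinearMap.id (Algebra.linearMap k A)
        (LinearMap.lTensor A (counit (R := k)) (comul a)) := by
    rw [show (LinearMap.lTensor A (counit (R := k)) : A ⊗[k] A →ₗ[k] A ⊗[k] k)
        = map LinearMap.id counit from rfl, lcomp]
  rw [h, Coalgebra.lTensor_counit_comul]
  simp

/-- coassociativity in `map` form -/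
lemma coassoc' (a : A) :
    (TensorProduct.assoc k A A A) (map comul LinearMap.id (comul a))
      = map LinearMap.id comul (comul a) := by
  have := Coalgebra.coassoc_apply (R := k) a
  exact this

section fwd
variable (S : A →ₗ[k] A)

lemma aux3' (w : A ⊗[k] A) (y : A) :
    psi (S y) w
      = map LinearMap.id (LinearMap.mul' k A ∘ₗ map LinearMap.id S)
          ((TensorProduct.assoc k A A A) (w ⊗ₜ[k] y)) := by
  induction w using TensorProduct.induction_on with
  | zero => simp
  | tmul p q => simp
  | add z₁ z₂ h₁ h₂ => simp [add_tmul, h₁, h₂]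

lemma aux5'' (w : A ⊗[k] A) (y : A) :
    psi y (map LinearMap.id S w)
      = map LinearMap.id (LinearMap.mul' k A ∘ₗ map S LinearMap.id)
          ((TensorProduct.assoc k A A A) (w ⊗ₜ[k] y)) := by
  induction w using TensorProduct.induction_on with
  | zero => simp
  | tmul p q => simp
  | add z₁ z₂ h₁ h₂ => simp [add_tmul, h₁, h₂]

/-- `κ ∘ (1 ⊗ S) ∘ Δ = f0` given the `(1 ⊗ S)` antipode axiom -/
lemma N1 (hS2 : LinearMap.mul' k A ∘ₗ map LinearMap.id S ∘ₗ comul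
      = Algebra.linearMap k A ∘ₗ counit (R := k)) (a : A) :
    Phi comul (map LinearMap.id S (comul a)) = a ⊗ₜ[k] (1 : A) := by
  have step1 : ∀ z : A ⊗[k] A,
      Phi comul (map LinearMap.id S z)
        = map LinearMap.id (LinearMap.mul' k A ∘ₗ map LinearMap.id S)
            ((TensorProduct.assoc k A A A) (map comul LinearMap.id z)) := by
    intro z
    induction z using TensorProduct.induction_on with
    | zero => simp
    | tmul x y => simp [Phi_tmul, aux3']
    | add z₁ z₂ h₁ h₂ => simp [h₁, h₂]
  rw [step1, coassoc', lcomp]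
  have : (LinearMap.mul' k A ∘ₗ map LinearMap.id S) ∘ₗ comul
      = Algebra.linearMap k A ∘ₗ counit (R := k) := by
    rw [LinearMap.comp_assoc]; exact hS2
  rw [this, counit_right]

/-- `Φ((1 ⊗ S) ∘ Δ) ∘ Δ = f0` given the `(S ⊗ 1)` antipode axiom -/
lemma N2 (hS1 : LinearMap.mul' k A ∘ₗ map S LinearMap.id ∘ₗ comul
      = Algebra.linearMap k A ∘ₗ counit (R := k)) (a : A) :
    Phi (map LinearMap.id S ∘ₗ comul) (comul a) = a ⊗ₜ[k] (1 : A) := by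
  have step1 : ∀ z : A ⊗[k] A,
      Phi (map LinearMap.id S ∘ₗ comul) z
        = map LinearMap.id (LinearMap.mul' k A ∘ₗ map S LinearMap.id)
            ((TensorProduct.assoc k A A A) (map comul LinearMap.id z)) := by
    intro z
    induction z using TensorProduct.induction_on with
    | zero => simp
    | tmul x y => simp [Phi_tmul, aux5'']
    | add z₁ z₂ h₁ h₂ => simp [h₁, h₂]
  rw [step1, coassoc', lcomp]
  have : (LinearMap.mul' k A ∘ₗ map S LinearMap.id) ∘ₗ comul
      = Algebra.linearMap k A ∘ₗ counit (R := k) := by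
    rw [LinearMap.comp_assoc]; exact hS1
  rw [this, counit_right]

end fwd



/-- `D = (Δ ⊗ 1)` then associate. -/
noncomputable def Dmap : A ⊗[k] A →ₗ[k] A ⊗[k] (A ⊗[k] A) :=
  (TensorProduct.assoc k A A A).toLinearMap ∘ₗ map comul LinearMap.id

lemma assoc_psi (w : A ⊗[k] A) (q b : A) :
    (TensorProduct.assoc k A A A) (w ⊗ₜ[k] (q * b))
      = map LinearMap.id (psi b) ((TensorProduct.assoc k A A A) (w ⊗ₜ[k] q)) := by
  induction w using TensorProduct.induction_on with
  | zero => simp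
  | tmul r s => simp
  | add z₁ z₂ h₁ h₂ => simp [add_tmul, h₁, h₂]

lemma Dmap_psi (b : A) (z : A ⊗[k] A) :
    (Dmap : A ⊗[k] A →ₗ[k] _) (psi b z) = map LinearMap.id (psi b) (Dmap z) := by
  induction z using TensorProduct.induction_on with
  | zero => simp
  | tmul p q => simpa [Dmap] using assoc_psi (comul p) q b
  | add z₁ z₂ h₁ h₂ => simp [h₁, h₂]

lemma assoc_lmap {M : Type*} [AddCommMonoid M] [Module k M]
    (g : A ⊗[k] A →ₗ[k] M) (w : A ⊗[k] A) (y : A) :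
    map LinearMap.id g ((TensorProduct.assoc k A A A) (w ⊗ₜ[k] y))
      = map LinearMap.id (g ∘ₗ (TensorProduct.mk k A A).flip y) w := by
  induction w using TensorProduct.induction_on with
  | zero => simp
  | tmul p q => simp [TensorProduct.mk]
  | add z₁ z₂ h₁ h₂ => simp [add_tmul, h₁, h₂]

/-- the comodule property of `κ = Phi comul`. -/
lemma CoM (w : A ⊗[k] A) :
    (Dmap : A ⊗[k] A →ₗ[k] _) (Phi comul w) = map LinearMap.id (Phi comul) (Dmap w) := by
  induction w using TensorProduct.induction_on with
  | zero => simp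
  | tmul x y =>
      rw [Phi_tmul, Dmap_psi]
      have h1 : (Dmap : A ⊗[k] A →ₗ[k] _) (comul x) = map LinearMap.id comul (comul x) := by
        simpa [Dmap] using coassoc' x
      rw [h1, lcomp]
      have h2 : map LinearMap.id (Phi comul) (Dmap (x ⊗ₜ[k] y))
          = map LinearMap.id ((Phi comul) ∘ₗ (TensorProduct.mk k A A).flip y) (comul x) := by
        simp only [Dmap, LinearMap.comp_apply, map_tmul, LinearMap.id_apply,
          LinearEquiv.coe_coe]
        exact assoc_lmap (Phi comul) (comul x) y
      rw [h2]
      have h3 : (psi y ∘ₗ comul : A →ₗ[k] A ⊗[k] A)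
          = Phi comul ∘ₗ (TensorProduct.mk k A A).flip y := by
        apply LinearMap.ext; intro q
        simp [Phi_tmul, TensorProduct.mk]
      rw [h3]
  | add z₁ z₂ h₁ h₂ => simp [h₁, h₂]

lemma pi_assoc (w : A ⊗[k] A) (y : A) :
    map LinearMap.id (pi : A ⊗[k] A →ₗ[k] A) ((TensorProduct.assoc k A A A) (w ⊗ₜ[k] y))
      = psi y (map LinearMap.id (Algebra.linearMap k A ∘ₗ counit (R := k)) w) := by
  induction w using TensorProduct.induction_on with
  | zero => simp
  | tmul p q => simp [Algebra.smul_def]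
  | add z₁ z₂ h₁ h₂ => simp [add_tmul, h₁, h₂]

/-- `(1 ⊗ (ε ⊗ 1)) ∘ D = id`. -/
lemma pi_Dmap (w : A ⊗[k] A) :
    map LinearMap.id (pi : A ⊗[k] A →ₗ[k] A) (Dmap w) = w := by
  induction w using TensorProduct.induction_on with
  | zero => simp
  | tmul x y =>
      simp only [Dmap, LinearMap.comp_apply, map_tmul, LinearMap.id_apply, LinearEquiv.coe_coe]
      rw [pi_assoc, counit_right]
      simp
  | add z₁ z₂ h₁ h₂ => simp [h₁, h₂]

end FusionAux

open Coalgebra FusionAux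

/-- **A bialgebra is a Hopf algebra iff the fusion map is bijective.**
A bialgebra `A` over a field `k` admits an antipode (i.e. is a Hopf algebra) if
and only if the linear map `κₗ = (1_A ⊗ m) ∘ (Δ ⊗ 1_A) : A ⊗ A → A ⊗ A` is
bijective. -/
theorem bialgebra_hopf_iff_fusion_bijective
    (k : Type*) [Field k] (A : Type*) [Ring A] [Bialgebra k A] :
    (∃ S : A →ₗ[k] A,
        LinearMap.mul' k A ∘ₗ TensorProduct.map S LinearMap.id ∘ₗ
            (Coalgebra.comul (R := k) (A := A)) =
          Algebra.linearMap k A ∘ₗ (Coalgebra.counit (R := k) (A := A)) ∧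
        LinearMap.mul' k A ∘ₗ TensorProduct.map LinearMap.id S ∘ₗ
            (Coalgebra.comul (R := k) (A := A)) =
          Algebra.linearMap k A ∘ₗ (Coalgebra.counit (R := k) (A := A))) ↔
      Function.Bijective
        (TensorProduct.map LinearMap.id (LinearMap.mul' k A) ∘ₗ
          (TensorProduct.assoc k A A A).toLinearMap ∘ₗ
            TensorProduct.map (Coalgebra.comul (R := k) (A := A)) LinearMap.id :
          A ⊗[k] A →ₗ[k] A ⊗[k] A) := by
  set K : A ⊗[k] A →ₗ[k] A ⊗[k] A :=
    (TensorProduct.map LinearMap.id (LinearMap.mul' k A) ∘ₗ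
      (TensorProduct.assoc k A A A).toLinearMap ∘ₗ
        TensorProduct.map (Coalgebra.comul (R := k) (A := A)) LinearMap.id) with hKdef
  have hK : K = Phi comul := rfl
  constructor
  · rintro ⟨S, hS1, hS2⟩
    set lam : A ⊗[k] A →ₗ[k] A ⊗[k] A := Phi (map LinearMap.id S ∘ₗ comul) with hlam
    refine Function.bijective_iff_has_inverse.mpr ⟨lam, ?_, ?_⟩
    · intro w
      induction w using TensorProduct.induction_on with
      | zero => simp
      | tmul a b =>
          rw [hK, Phi_tmul, Phi_psi, N2 S hS1]
          simp
      | add z₁ z₂ h₁ h₂ => simp [map_add, h₁, h₂]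
    · intro w
      induction w using TensorProduct.induction_on with
      | zero => simp
      | tmul a b =>
          rw [hlam, Phi_tmul, hK, Phi_psi]
          rw [show (map LinearMap.id S ∘ₗ comul) a = map LinearMap.id S (comul a) from rfl,
            N1 S hS2]
          simp
      | add z₁ z₂ h₁ h₂ => simp [map_add, h₁, h₂]
  · intro h
    set e : (A ⊗[k] A) ≃ₗ[k] A ⊗[k] A := LinearEquiv.ofBijective K h with he
    set T : A ⊗[k] A →ₗ[k] A ⊗[k] A := e.symm.toLinearMap with hT
    have hKT : ∀ w, K (T w) = w := by
      intro w
      have := e.apply_symm_apply w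
      simpa [he, hT, LinearEquiv.ofBijective_apply] using this
    have hTK : ∀ w, T (K w) = w := by
      intro w
      have : e.symm (e w) = w := e.symm_apply_apply w
      simpa [he, hT, LinearEquiv.ofBijective_apply] using this
    have Tpsi : ∀ (b : A) (w : A ⊗[k] A), T (psi b w) = psi b (T w) := by
      intro b w
      calc T (psi b w) = T (psi b (K (T w))) := by rw [hKT]
        _ = T (K (psi b (T w))) := by
              rw [show K (psi b (T w)) = psi b (K (T w)) from by
                rw [hK]; exact Phi_psi comul b (T w)]
        _ = psi b (T w) := hTK _
    have Kf0 : ∀ a : A, K (a ⊗ₜ[k] (1 : A)) = comul a := by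
      intro a
      rw [hK, Phi_tmul, psi_one]
    have TC : ∀ a : A, T (comul a) = a ⊗ₜ[k] (1 : A) := by
      intro a
      rw [← Kf0 a, hTK]
    set S : A →ₗ[k] A := FusionAux.pi ∘ₗ T ∘ₗ FusionAux.f0 with hS
    have hSa : ∀ a : A, S a = FusionAux.pi (T (a ⊗ₜ[k] (1 : A))) := fun a => rfl
    have muS : ∀ z : A ⊗[k] A,
        LinearMap.mul' k A (map S LinearMap.id z) = FusionAux.pi (T z) := by
      intro z
      induction z using TensorProduct.induction_on with
      | zero => simp
      | tmul x y =>
          have : T (x ⊗ₜ[k] y) = psi y (T (x ⊗ₜ[k] (1 : A))) := by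
            rw [← Tpsi]
            congr 1
            simp
          rw [map_tmul, LinearMap.mul'_apply, this, pi_psi, LinearMap.id_apply, hSa]
      | add z₁ z₂ h₁ h₂ => simp [map_add, h₁, h₂]
    have piK : ∀ z : A ⊗[k] A, FusionAux.pi (K z) = LinearMap.mul' k A z := by
      intro z
      induction z using TensorProduct.induction_on with
      | zero => simp
      | tmul x y => rw [hK, Phi_tmul, pi_psi, pi_comul, LinearMap.mul'_apply]
      | add z₁ z₂ h₁ h₂ => simp [map_add, h₁, h₂]
    have CoMT : ∀ w, (Dmap : A ⊗[k] A →ₗ[k] _) (T w) = map LinearMap.id T (Dmap w) := by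
      intro w
      have : map LinearMap.id T (Dmap w) = Dmap (T w) := by
        calc map LinearMap.id T (Dmap w)
            = map LinearMap.id T (Dmap (K (T w))) := by rw [hKT]
          _ = map LinearMap.id T (map LinearMap.id K (Dmap (T w))) := by
              rw [show (Dmap : A ⊗[k] A →ₗ[k] _) (K (T w))
                  = map LinearMap.id K (Dmap (T w)) from by rw [hK]; exact CoM (T w)]
          _ = map LinearMap.id (T ∘ₗ K) (Dmap (T w)) := lcomp _ _ _
          _ = Dmap (T w) := by
              rw [show T ∘ₗ K = LinearMap.id from LinearMap.ext hTK]
              simp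
      exact this.symm
    have N6 : ∀ a : A, map LinearMap.id S (comul a) = T (a ⊗ₜ[k] (1 : A)) := by
      intro a
      have h1 : (Dmap : A ⊗[k] A →ₗ[k] _) (T (a ⊗ₜ[k] (1 : A)))
          = map LinearMap.id (T ∘ₗ FusionAux.f0) (comul a) := by
        rw [CoMT]
        have h2 : (Dmap : A ⊗[k] A →ₗ[k] _) (a ⊗ₜ[k] (1 : A))
            = (TensorProduct.assoc k A A A) ((comul a) ⊗ₜ[k] (1 : A)) := by
          simp [Dmap]
        rw [h2, assoc_lmap]
        rfl
      calc map LinearMap.id S (comul a)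
          = map LinearMap.id (FusionAux.pi ∘ₗ (T ∘ₗ FusionAux.f0)) (comul a) := rfl
        _ = map LinearMap.id FusionAux.pi
              (map LinearMap.id (T ∘ₗ FusionAux.f0) (comul a)) := (lcomp _ _ _).symm
        _ = map LinearMap.id FusionAux.pi (Dmap (T (a ⊗ₜ[k] (1 : A)))) := by rw [h1]
        _ = T (a ⊗ₜ[k] (1 : A)) := pi_Dmap _
    refine ⟨S, ?_, ?_⟩
    · apply LinearMap.ext
      intro a
      simp only [LinearMap.comp_apply]
      rw [muS, TC]
      simp [Algebra.algebraMap_eq_smul_one]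
    · apply LinearMap.ext
      intro a
      simp only [LinearMap.comp_apply]
      rw [N6, ← piK, hKT]
      simp [Algebra.algebraMap_eq_smul_one]
end

section
/- Let A be a Hopf algebra over a field k and σ : A ⊗ A → k a 2-cocycle with convolution inverse σ̄. Define the algebra A_σ̄ (product a ·_σ̄ b = σ̄(a_(2), b_(2)) a_(1) b_(1)) and the algebra _σA (product a ·_σ b = σ(a_(1), b_(1)) a_(2) b_(2)). Then the linear map φ : _σA → A_σ̄ given by φ(a) = σ(a_(1), S(a_(2))) S(a_(3)) satisfies m_{A_σ̄} ∘ (1 ⊗ φ) ∘ Δ = u ∘ ε, i.e. a_(1) ·_σ̄ φ(a_(2)) = ε(a)1 for all a ∈ A. -/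
/-!
Work in convolution algebras of linear maps out of the coalgebras `A` and `A ⊗ A`. The twisted
product of `A_σ̄` is the convolution `m * σ̄` (scalars pushed into `A` by the unit), and, writing
`Γ a = a₁ ⊗ S a₂`, anti-comultiplicativity of `S` gives `G (a₁ ⊗ φ a₂) = (G * σ) (Γ a)` for every
linear `G : A ⊗ A → A`. So `a₁ ·σ̄ φ a₂ = ((m * σ̄) * σ) (Γ a) = (m * (σ̄ * σ)) (Γ a) = m (Γ a)`,
which is `ε a • 1` by the antipode axiom.
-/

open TensorProduct Coalgebra HopfAlgebra WithConv
open LinearMap (id)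
open Algebra.TensorProduct (includeLeft includeRight)
open scoped RingTheory.LinearMap

namespace LinearMap

variable {k C B : Type*} [CommSemiring k] [AddCommMonoid C] [Module k C] [Coalgebra k C]
  [Semiring B] [Algebra k B]

lemma convMul_algebraLinearMap_comp (f : C →ₗ[k] B) (τ : C →ₗ[k] k) :
    (toConv f * toConv (η ∘ₗ τ)).ofConv = (TensorProduct.rid k B).toLinearMap ∘ₗ (f ⊗ₘ τ) ∘ₗ δ := by
  have h : μ ∘ₗ (f ⊗ₘ η ∘ₗ τ) = (TensorProduct.rid k B).toLinearMap ∘ₗ (f ⊗ₘ τ) := by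
    ext x y
    simp [← Algebra.commutes, ← Algebra.smul_def]
  rw [convMul_def, ofConv_toConv, ofConv_toConv, ofConv_toConv, ← comp_assoc, h, comp_assoc]

end LinearMap

namespace HopfAlgebra

variable {k A : Type*} [CommSemiring k] [Semiring A] [HopfAlgebra k A]

lemma includeLeft_convMul_includeRight :
    toConv (includeLeft : A →ₐ[k] A ⊗[k] A).toLinearMap * toConv includeRight.toLinearMap =
      toConv (δ : A →ₗ[k] A ⊗[k] A) := by
  ext a
  rw [(ℛ k a).convMul_apply, ← (ℛ k a).eq]
  simp

lemma includeRight_comp_antipode_convMul_includeLeft_comp_antipode :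
    toConv ((includeRight : A →ₐ[k] A ⊗[k] A).toLinearMap ∘ₗ antipode k) *
        toConv (includeLeft.toLinearMap ∘ₗ antipode k) =
      toConv ((antipode k ⊗ₘ antipode k) ∘ₗ (TensorProduct.comm k A A).toLinearMap ∘ₗ δ) := by
  ext a
  rw [(ℛ k a).convMul_apply]
  simp [← (ℛ k a).eq]

lemma algHom_comp_antipode_convMul_algHom {B : Type*} [Semiring B] [Algebra k B]
    (f : A →ₐ[k] B) : toConv (f.toLinearMap ∘ₗ antipode k) * toConv f.toLinearMap = 1 := by
  ext a
  rw [(ℛ k a).convMul_apply]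
  simp [← map_mul, ← map_sum, sum_antipode_mul_eq_algebraMap_counit]

-- `Δ = i₁ * i₂` and `(S ⊗ S) ∘ flip ∘ Δ = (i₂ ∘ S) * (i₁ ∘ S)` for the two inclusions `iⱼ` into
-- `A ⊗ A`, so associativity of convolution cancels the middle factors `(i₁ ∘ S) * i₁`.
lemma map_antipode_comp_comm_comp_comul_convMul_comul :
    toConv ((antipode k ⊗ₘ antipode k) ∘ₗ (TensorProduct.comm k A A).toLinearMap ∘ₗ δ) *
      toConv (δ : A →ₗ[k] A ⊗[k] A) = 1 := by
  rw [← includeRight_comp_antipode_convMul_includeLeft_comp_antipode,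
    ← includeLeft_convMul_includeRight, mul_assoc,
    ← mul_assoc (toConv (includeLeft.toLinearMap ∘ₗ antipode k)),
    algHom_comp_antipode_convMul_algHom, one_mul, algHom_comp_antipode_convMul_algHom]

theorem comul_comp_antipode :
    δ ∘ₗ antipode k = (antipode k ⊗ₘ antipode k) ∘ₗ (TensorProduct.comm k A A).toLinearMap ∘ₗ δ :=
  congrArg ofConv (left_inv_eq_right_inv map_antipode_comp_comm_comp_comul_convMul_comul
    LinearMap.comul_right_inv).symm

lemma map_comul_comul_comp_comul :
    (δ ⊗ₘ δ) ∘ₗ (δ : A →ₗ[k] A ⊗[k] A) =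
      (TensorProduct.assoc k A A (A ⊗[k] A)).symm.toLinearMap ∘ₗ
        (id ⊗ₘ (TensorProduct.assoc k A A A).toLinearMap) ∘ₗ (id ⊗ₘ (δ ⊗ₘ id) ∘ₗ δ) ∘ₗ δ := by
  simp only [coassoc_simps]

lemma map_comul_comul_comp_lTensor_antipode_comp_comul :
    (δ ⊗ₘ δ) ∘ₗ (id ⊗ₘ antipode k) ∘ₗ (δ : A →ₗ[k] A ⊗[k] A) =
      (id ⊗ₘ (antipode k ⊗ₘ antipode k) ∘ₗ (TensorProduct.comm k A A).toLinearMap) ∘ₗ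
        (TensorProduct.assoc k A A (A ⊗[k] A)).symm.toLinearMap ∘ₗ
        (id ⊗ₘ (TensorProduct.assoc k A A A).toLinearMap) ∘ₗ (id ⊗ₘ (δ ⊗ₘ id) ∘ₗ δ) ∘ₗ δ := by
  rw [← map_comul_comul_comp_comul, ← LinearMap.comp_assoc, ← LinearMap.comp_assoc, ← map_comp,
    ← map_comp, comul_comp_antipode, LinearMap.id_comp, LinearMap.comp_id, LinearMap.comp_assoc]

/-- `a ↦ τ (a₁ ⊗ S a₂) • S a₃`; for `τ = σ` this is the map `φ` of the theorem. -/
noncomputable def twistedAntipode (τ : A ⊗[k] A →ₗ[k] k) : A →ₗ[k] A :=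
  (TensorProduct.lid k A).toLinearMap ∘ₗ ((τ ∘ₗ (id ⊗ₘ antipode k)) ⊗ₘ antipode k) ∘ₗ
    (δ ⊗ₘ id) ∘ₗ δ

lemma comp_lTensor_twistedAntipode_comp_comul {B : Type*} [Semiring B] [Algebra k B]
    (G : A ⊗[k] A →ₗ[k] B) (τ : A ⊗[k] A →ₗ[k] k) :
    G ∘ₗ (id ⊗ₘ twistedAntipode τ) ∘ₗ δ =
      (toConv G * toConv (η ∘ₗ τ)).ofConv ∘ₗ (id ⊗ₘ antipode k) ∘ₗ δ := by
  -- both sides send `a` to `τ (a₂ ⊗ S a₃) • G (a₁ ⊗ S a₄)`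
  calc _ = (G ∘ₗ (id ⊗ₘ (TensorProduct.lid k A).toLinearMap ∘ₗ
          ((τ ∘ₗ (id ⊗ₘ antipode k)) ⊗ₘ antipode k))) ∘ₗ (id ⊗ₘ (δ ⊗ₘ id) ∘ₗ δ) ∘ₗ δ := by
        simp only [twistedAntipode, LinearMap.comp_assoc, ← LinearMap.lTensor_def,
          LinearMap.lTensor_comp]
    _ = (μ ∘ₗ (G ⊗ₘ (η ∘ₗ τ)) ∘ₗ (tensorTensorTensorComm k A A A A).toLinearMap ∘ₗ
          (id ⊗ₘ (antipode k ⊗ₘ antipode k) ∘ₗ (TensorProduct.comm k A A).toLinearMap) ∘ₗ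
          (TensorProduct.assoc k A A (A ⊗[k] A)).symm.toLinearMap ∘ₗ
          (id ⊗ₘ (TensorProduct.assoc k A A A).toLinearMap)) ∘ₗ
          (id ⊗ₘ (δ ⊗ₘ id) ∘ₗ δ) ∘ₗ δ := by
        congr 1
        ext x y z w
        simp [← Algebra.commutes, ← Algebra.smul_def]
    _ = _ := by
        rw [LinearMap.convMul_def, ofConv_toConv, ofConv_toConv, ofConv_toConv,
          TensorProduct.comul_def]
        simp only [LinearMap.comp_assoc, AlgebraTensorModule.map_eq,
          AlgebraTensorModule.tensorTensorTensorComm_eq,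
          map_comul_comul_comp_lTensor_antipode_comp_comul]

end HopfAlgebra

theorem twisted_antipode_right_inverse_general
    (k : Type*) [Field k] (A : Type*) [Ring A] [HopfAlgebra k A]
    (σ σb : A ⊗[k] A →ₗ[k] k)
    (hconv₂ : LinearMap.mul' k k ∘ₗ TensorProduct.map σb σ ∘ₗ
        (Coalgebra.comul (R := k) (A := A ⊗[k] A)) =
      (Coalgebra.counit (R := k) (A := A ⊗[k] A))) :
    -- the twisted product  a ·σ̄ b = σ̄(a₂,b₂) a₁b₁  of A_σ̄, as a linear map
    let mulσb : A ⊗[k] A →ₗ[k] A :=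
      (TensorProduct.rid k A).toLinearMap ∘ₗ
        TensorProduct.map (LinearMap.mul' k A) σb ∘ₗ
          (TensorProduct.tensorTensorTensorComm k A A A A).toLinearMap ∘ₗ
            TensorProduct.map (Coalgebra.comul (R := k) (A := A))
              (Coalgebra.comul (R := k) (A := A))
    -- φ(a) = σ(a₁, S(a₂)) S(a₃)
    let S : A →ₗ[k] A := HopfAlgebra.antipode (R := k)
    let φ : A →ₗ[k] A :=
      (TensorProduct.lid k A).toLinearMap ∘ₗ
        TensorProduct.map (σ ∘ₗ TensorProduct.map LinearMap.id S) S ∘ₗ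
          TensorProduct.map (Coalgebra.comul (R := k) (A := A)) LinearMap.id ∘ₗ
            (Coalgebra.comul (R := k) (A := A))
    mulσb ∘ₗ TensorProduct.map LinearMap.id φ ∘ₗ (Coalgebra.comul (R := k) (A := A)) =
      Algebra.linearMap k A ∘ₗ (Coalgebra.counit (R := k) (A := A)) := by
  intro mulσb S φ
  have hmul : mulσb = (toConv (μ : A ⊗[k] A →ₗ[k] A) * toConv (η ∘ₗ σb)).ofConv :=
    (LinearMap.convMul_algebraLinearMap_comp _ _).symm
  have hinv : toConv (η ∘ₗ σb) * toConv (η ∘ₗ σ) = (1 : WithConv (A ⊗[k] A →ₗ[k] A)) := by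
    have h := LinearMap.algHom_comp_convMul_distrib (Algebra.ofId k A) (toConv σb) (toConv σ)
    exact ofConv_injective (h.symm.trans (congrArg ((Algebra.ofId k A).toLinearMap ∘ₗ ·) hconv₂))
  calc mulσb ∘ₗ (id ⊗ₘ φ) ∘ₗ δ
        = (toConv mulσb * toConv (η ∘ₗ σ)).ofConv ∘ₗ (id ⊗ₘ S) ∘ₗ δ := by
          exact comp_lTensor_twistedAntipode_comp_comul mulσb σ
    _ = μ ∘ₗ (id ⊗ₘ S) ∘ₗ δ := by rw [hmul, toConv_ofConv, mul_assoc, hinv, mul_one]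
    _ = η ∘ₗ ε := mul_antipode_lTensor_comul

/-- Let `A` be a Hopf algebra over a field `k` and `σ : A ⊗ A → k` a 2-cocycle
with convolution inverse `σ̄`.  The linear map `φ(a) = σ(a₁, S(a₂)) S(a₃)`
satisfies `m_{A_σ̄} ∘ (1 ⊗ φ) ∘ Δ = u ∘ ε`, i.e. `a₁ ·σ̄ φ(a₂) = ε(a)1` for all
`a ∈ A`, where `·σ̄` is the twisted product of `A_σ̄`. -/
theorem twisted_antipode_right_inverse
    (k : Type*) [Field k] (A : Type*) [Ring A] [HopfAlgebra k A]
    (σ σb : A ⊗[k] A →ₗ[k] k)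
    -- σb is a convolution inverse of σ (in the dual algebra of the coalgebra A ⊗ A)
    (hconv₁ : LinearMap.mul' k k ∘ₗ TensorProduct.map σ σb ∘ₗ
        (Coalgebra.comul (R := k) (A := A ⊗[k] A)) =
      (Coalgebra.counit (R := k) (A := A ⊗[k] A)))
    (hconv₂ : LinearMap.mul' k k ∘ₗ TensorProduct.map σb σ ∘ₗ
        (Coalgebra.comul (R := k) (A := A ⊗[k] A)) =
      (Coalgebra.counit (R := k) (A := A ⊗[k] A)))
    -- the 2-cocycle equation σ(a₁,b₁)σ(a₂b₂,c) = σ(b₁,c₁)σ(a,b₂c₂)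
    (hcoc : LinearMap.mul' k k ∘ₗ
        TensorProduct.map σ (σ ∘ₗ TensorProduct.map (LinearMap.mul' k A) LinearMap.id) ∘ₗ
        (TensorProduct.assoc k (A ⊗[k] A) (A ⊗[k] A) A).toLinearMap ∘ₗ
        TensorProduct.map
          ((TensorProduct.tensorTensorTensorComm k A A A A).toLinearMap ∘ₗ
            TensorProduct.map (Coalgebra.comul (R := k) (A := A))
              (Coalgebra.comul (R := k) (A := A)))
          LinearMap.id =
      LinearMap.mul' k k ∘ₗ
        TensorProduct.map LinearMap.id σ ∘ₗ
        (TensorProduct.leftComm k A k A).toLinearMap ∘ₗ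
        TensorProduct.map LinearMap.id (TensorProduct.map σ (LinearMap.mul' k A)) ∘ₗ
        TensorProduct.map LinearMap.id
          ((TensorProduct.tensorTensorTensorComm k A A A A).toLinearMap ∘ₗ
            TensorProduct.map (Coalgebra.comul (R := k) (A := A))
              (Coalgebra.comul (R := k) (A := A))) ∘ₗ
        (TensorProduct.assoc k A A A).toLinearMap)
    -- normalization: σ(a,1) = σ(1,a) = ε(a)
    (hnorm : ∀ a : A, σ (a ⊗ₜ[k] (1 : A)) = Coalgebra.counit (R := k) a ∧
      σ ((1 : A) ⊗ₜ[k] a) = Coalgebra.counit (R := k) a) :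
    -- the twisted product  a ·σ̄ b = σ̄(a₂,b₂) a₁b₁  of A_σ̄, as a linear map
    let mulσb : A ⊗[k] A →ₗ[k] A :=
      (TensorProduct.rid k A).toLinearMap ∘ₗ
        TensorProduct.map (LinearMap.mul' k A) σb ∘ₗ
          (TensorProduct.tensorTensorTensorComm k A A A A).toLinearMap ∘ₗ
            TensorProduct.map (Coalgebra.comul (R := k) (A := A))
              (Coalgebra.comul (R := k) (A := A))
    -- φ(a) = σ(a₁, S(a₂)) S(a₃)
    let S : A →ₗ[k] A := HopfAlgebra.antipode (R := k)
    let φ : A →ₗ[k] A :=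
      (TensorProduct.lid k A).toLinearMap ∘ₗ
        TensorProduct.map (σ ∘ₗ TensorProduct.map LinearMap.id S) S ∘ₗ
          TensorProduct.map (Coalgebra.comul (R := k) (A := A)) LinearMap.id ∘ₗ
            (Coalgebra.comul (R := k) (A := A))
    mulσb ∘ₗ TensorProduct.map LinearMap.id φ ∘ₗ (Coalgebra.comul (R := k) (A := A)) =
      Algebra.linearMap k A ∘ₗ (Coalgebra.counit (R := k) (A := A)) :=
  twisted_antipode_right_inverse_general k A σ σb hconv₂
end

section
/- Let ξ ∈ k be a primitive m-th root of unity with m ≥ 5, and let F = diag(ξ, 1, ξ⁻¹) ∈ GL_3(k). Then there exists K ∈ GL_3(k) such that F = (ᵗK) K⁻¹. -/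
open Matrix

/-- Let `k` be an algebraically closed field of characteristic zero, `ξ ∈ k` a
primitive `m`-th root of unity with `m ≥ 5`, and `F = diag(ξ, 1, ξ⁻¹)`.  Then
there exists `K ∈ GL₃(k)` with `F = ᵗK K⁻¹`. -/
theorem diag_primitive_root_transpose_form
    (k : Type*) [Field k] [IsAlgClosed k] [CharZero k]
    (m : ℕ) (hm : 5 ≤ m) (ξ : k) (hξ : IsPrimitiveRoot ξ m) :
    ∃ K : Matrix (Fin 3) (Fin 3) k, IsUnit K ∧
      (Matrix.diagonal ![ξ, 1, ξ⁻¹] : Matrix (Fin 3) (Fin 3) k) = Kᵀ * K⁻¹ := by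
  have hξ0 : ξ ≠ 0 := hξ.ne_zero (by omega)
  refine ⟨!![0, 0, 1; 0, 1, 0; ξ, 0, 0], ?_, ?_⟩
  · have hdet : (!![0, 0, 1; 0, 1, 0; ξ, 0, 0] : Matrix (Fin 3) (Fin 3) k).det = -ξ := by
      simp [Matrix.det_fin_three]
    rw [Matrix.isUnit_iff_isUnit_det, hdet]
    exact (IsUnit.neg_iff _).mpr hξ0.isUnit
  · have hKt : (!![0, 0, 1; 0, 1, 0; ξ, 0, 0] : Matrix (Fin 3) (Fin 3) k)ᵀ =
        (Matrix.diagonal ![ξ, 1, ξ⁻¹]) * !![0, 0, 1; 0, 1, 0; ξ, 0, 0] := by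
      ext i j
      fin_cases i <;> fin_cases j <;>
        simp [Matrix.mul_apply, Fin.sum_univ_three, Matrix.diagonal,
          inv_mul_cancel₀ hξ0, Matrix.vecHead, Matrix.vecTail]
    rw [hKt, Matrix.mul_assoc, Matrix.mul_nonsing_inv, Matrix.mul_one]
    simp [Matrix.det_fin_three, hξ0]
end
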